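/- arXiv:2208.03239 — 5 statements merged into one kernel-verified Lean document; each statement's English description precedes it below -/
import Mathlib

section
/- Let n ≥ 3 and suppose α₁, …, αₙ ∈ [π/2, π) satisfy α₁ + ⋯ + αₙ = (n−2)π. Then ∑ᵢ tan(αᵢ/2) ≥ n·cot(π/n), with equality if and only if every αᵢ equals (n−2)π/n. -/
/-! The half-angles `αᵢ / 2` lie in `[π/4, π/2)`, where `tan` is strictly convex, and their
mean is `π/2 - π/n`. Jensen's inequality bounds `∑ tan (αᵢ / 2)` below by
`n · tan (π/2 - π/n) = n · cot (π/n)`, and strict convexity forces equality only when every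
half-angle equals the mean. -/

open Real Set Finset

theorem strictConvexOn_tan_Ico : StrictConvexOn ℝ (Ico 0 (π / 2)) tan := by
  have cos_pos {x : ℝ} (hx : x ∈ Ico 0 (π / 2)) : 0 < cos x :=
    cos_pos_of_mem_Ioo ⟨by linarith [hx.1, pi_pos], hx.2⟩
  refine StrictMonoOn.strictConvexOn_of_deriv (convex_Ico _ _)
    (continuousOn_tan.mono fun x hx ↦ (cos_pos hx).ne') ?_
  rw [interior_Ico]
  intro x hx y hy hxy
  have hcos : cos y < cos x := strictAntiOn_cos
    ⟨hx.1.le, by linarith [hx.2, pi_pos]⟩ ⟨hy.1.le, by linarith [hy.2, pi_pos]⟩ hxy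
  have hcos_y := cos_pos (Ioo_subset_Ico_self hy)
  rw [deriv_tan, deriv_tan]
  gcongr

theorem tan_pi_div_two_sub_eq_cot (x : ℝ) : tan (π / 2 - x) = cot x := by
  rw [tan_pi_div_two_sub, ← cot_inv_eq_tan, inv_inv]

section Jensen

variable {ι E : Type*} [AddCommGroup E] [Module ℝ E] {s : Set E} {f : E → ℝ} {t : Finset ι}
  {p : ι → E}

theorem ConvexOn.card_mul_map_mean_le_sum (hf : ConvexOn ℝ s f) (ht : t.Nonempty)
    (hp : ∀ i ∈ t, p i ∈ s) :
    #t * f ((#t : ℝ)⁻¹ • ∑ i ∈ t, p i) ≤ ∑ i ∈ t, f (p i) := by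
  have hcard : (0 : ℝ) < #t := by exact_mod_cast ht.card_pos
  have := hf.map_sum_le (w := fun _ ↦ (#t : ℝ)⁻¹) (fun _ _ ↦ by positivity)
    (by simp [hcard.ne']) hp
  rw [← smul_sum, ← smul_sum, smul_eq_mul] at this
  rwa [le_inv_mul_iff₀ hcard] at this

theorem StrictConvexOn.sum_eq_card_mul_map_mean_iff (hf : StrictConvexOn ℝ s f) (ht : t.Nonempty)
    (hp : ∀ i ∈ t, p i ∈ s) :
    ∑ i ∈ t, f (p i) = #t * f ((#t : ℝ)⁻¹ • ∑ i ∈ t, p i) ↔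
      ∀ i ∈ t, p i = (#t : ℝ)⁻¹ • ∑ i ∈ t, p i := by
  have hcard : (0 : ℝ) < #t := by exact_mod_cast ht.card_pos
  have := hf.map_sum_eq_iff (w := fun _ ↦ (#t : ℝ)⁻¹) (fun _ _ ↦ by positivity)
    (by simp [hcard.ne']) hp
  rw [← smul_sum, ← smul_sum, smul_eq_mul] at this
  rw [← this, eq_comm, eq_inv_mul_iff_mul_eq₀ hcard.ne']

end Jensen

theorem tan_half_sum_ge_ngon_general (n : ℕ) (α : Fin n → ℝ)
    (hα : ∀ i, Real.pi / 2 ≤ α i ∧ α i < Real.pi)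
    (hsum : ∑ i, α i = (n - 2 : ℝ) * Real.pi) :
    (n : ℝ) * Real.cot (Real.pi / n) ≤ ∑ i, Real.tan (α i / 2) ∧
      (∑ i, Real.tan (α i / 2) = (n : ℝ) * Real.cot (Real.pi / n) ↔
        ∀ i, α i = (n - 2 : ℝ) * Real.pi / n) := by
  have hn : n ≠ 0 := by
    rintro rfl
    simp [pi_ne_zero] at hsum
  have : NeZero n := ⟨hn⟩
  have hmem : ∀ i ∈ Finset.univ, α i / 2 ∈ Ico 0 (π / 2) := fun i _ ↦
    ⟨by linarith [(hα i).1, pi_pos], by linarith [(hα i).2]⟩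
  have hmean : (#(Finset.univ : Finset (Fin n)) : ℝ)⁻¹ • ∑ i, α i / 2 = π / 2 - π / n := by
    rw [card_univ, Fintype.card_fin, smul_eq_mul, ← sum_div, hsum]
    field_simp
  have hle := strictConvexOn_tan_Ico.convexOn.card_mul_map_mean_le_sum univ_nonempty hmem
  have heq := strictConvexOn_tan_Ico.sum_eq_card_mul_map_mean_iff univ_nonempty hmem
  rw [hmean, card_univ, Fintype.card_fin, tan_pi_div_two_sub_eq_cot] at hle heq
  refine ⟨hle, heq.trans (forall_congr' fun i ↦ ?_)⟩
  have hangle : (n - 2 : ℝ) * π / n = 2 * (π / 2 - π / n) := by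
    field_simp
  simp only [Finset.mem_univ, true_implies, hangle]
  constructor <;> intro h <;> linarith

/-- Let `n ≥ 3` and suppose `α₁, …, αₙ ∈ [π/2, π)` satisfy `∑ αᵢ = (n-2)π`. Then
`∑ tan (αᵢ/2) ≥ n · cot (π/n)`, with equality iff every `αᵢ` equals `(n-2)π/n`. -/
theorem tan_half_sum_ge_ngon (n : ℕ) (hn : 3 ≤ n) (α : Fin n → ℝ)
    (hα : ∀ i, Real.pi / 2 ≤ α i ∧ α i < Real.pi)
    (hsum : ∑ i, α i = (n - 2 : ℝ) * Real.pi) :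
    (n : ℝ) * Real.cot (Real.pi / n) ≤ ∑ i, Real.tan (α i / 2) ∧
      (∑ i, Real.tan (α i / 2) = (n : ℝ) * Real.cot (Real.pi / n) ↔
        ∀ i, α i = (n - 2 : ℝ) * Real.pi / n) :=
  tan_half_sum_ge_ngon_general n α hα hsum
end

section
/- Suppose a folded ribbon 3-stick unknot with ribbon linking number ±1 has knot diagram a non-degenerate triangle of perimeter 1 with interior angles α₁, α₂, α₃, and the ribbon width w satisfies the non-overlap conditions on each edge (each edge length is at least (w/2) times the sum of the tangents of half the adjacent angles). Then w ≤ 1/√3, with the bound attained only when the triangle is equilateral. -/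
/-!
If the half-angles `x, y, z` of a triangle sum to `π/2`, their tangents satisfy
`tan x tan y + tan y tan z + tan z tan x = 1`, so `(∑ tan)² ≥ 3 · 1` with equality only for
equal tangents. Adding the three edge constraints and using the perimeter gives `w · ∑ tan ≤ 1`,
hence `w ≤ 1/√3`; at equality the tangents, hence the angles, are equal, and then the three
edge constraints are tight and have a common left-hand side.
-/

open Real

lemma tan_mul_tan_add_tan_mul_add_tan_mul_of_add_eq_pi_div_two {x y z : ℝ}
    (hsum : x + y + z = π / 2) (hx : cos x ≠ 0) (hy : cos y ≠ 0) (hz : cos z ≠ 0) :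
    tan x * tan y + tan y * tan z + tan z * tan x = 1 := by
  have hz' : z = π / 2 - (x + y) := by linarith
  have hsin_z : sin z = cos x * cos y - sin x * sin y := by
    rw [hz', sin_pi_div_two_sub, cos_add]
  have hcos_z : cos z = sin x * cos y + cos x * sin y := by
    rw [hz', cos_pi_div_two_sub, sin_add]
  simp only [tan_eq_sin_div_cos]
  field_simp
  rw [hsin_z, hcos_z]
  ring

lemma sqrt_three_le_add_of_mul_add_mul_add_mul_eq_one {t₁ t₂ t₃ : ℝ}
    (h : t₁ * t₂ + t₂ * t₃ + t₃ * t₁ = 1) (hpos : 0 ≤ t₁ + t₂ + t₃) :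
    √3 ≤ t₁ + t₂ + t₃ :=
  Real.sqrt_le_iff.mpr ⟨hpos, by
    nlinarith [sq_nonneg (t₁ - t₂), sq_nonneg (t₂ - t₃), sq_nonneg (t₃ - t₁)]⟩

lemma eq_and_eq_of_mul_add_mul_add_mul_eq_one_of_add_eq_sqrt_three {t₁ t₂ t₃ : ℝ}
    (h : t₁ * t₂ + t₂ * t₃ + t₃ * t₁ = 1) (heq : t₁ + t₂ + t₃ = √3) :
    t₁ = t₂ ∧ t₂ = t₃ := by
  have hsq : (t₁ + t₂ + t₃) ^ 2 = 3 := by rw [heq, sq_sqrt (by norm_num)]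
  constructor <;> nlinarith [sq_nonneg (t₁ - t₂), sq_nonneg (t₂ - t₃), sq_nonneg (t₃ - t₁)]

section Triangle

variable {α₁ α₂ α₃ : ℝ} (h₁ : 0 < α₁ ∧ α₁ < π) (h₂ : 0 < α₂ ∧ α₂ < π)
  (h₃ : 0 < α₃ ∧ α₃ < π) (hangles : α₁ + α₂ + α₃ = π)

include h₁ h₂ h₃ hangles

lemma tan_half_mul_add_tan_half_mul_add_tan_half_mul_eq_one :
    tan (α₁ / 2) * tan (α₂ / 2) + tan (α₂ / 2) * tan (α₃ / 2) +
      tan (α₃ / 2) * tan (α₁ / 2) = 1 := by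
  have hcos {α : ℝ} (h : 0 < α ∧ α < π) : cos (α / 2) ≠ 0 :=
    (cos_pos_of_mem_Ioo ⟨by linarith, by linarith⟩).ne'
  exact tan_mul_tan_add_tan_mul_add_tan_mul_of_add_eq_pi_div_two (by linarith)
    (hcos h₁) (hcos h₂) (hcos h₃)

lemma sqrt_three_le_tan_half_add_tan_half_add_tan_half :
    √3 ≤ tan (α₁ / 2) + tan (α₂ / 2) + tan (α₃ / 2) := by
  have htan {α : ℝ} (h : 0 < α ∧ α < π) : 0 < tan (α / 2) :=
    tan_pos_of_pos_of_lt_pi_div_two (by linarith) (by linarith)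
  exact sqrt_three_le_add_of_mul_add_mul_add_mul_eq_one
    (tan_half_mul_add_tan_half_mul_add_tan_half_mul_eq_one h₁ h₂ h₃ hangles)
    (by linarith [htan h₁, htan h₂, htan h₃])

lemma eq_pi_div_three_of_tan_half_add_tan_half_add_tan_half_eq_sqrt_three
    (heq : tan (α₁ / 2) + tan (α₂ / 2) + tan (α₃ / 2) = √3) :
    α₁ = π / 3 ∧ α₂ = π / 3 ∧ α₃ = π / 3 := by
  obtain ⟨h12, h23⟩ := eq_and_eq_of_mul_add_mul_add_mul_eq_one_of_add_eq_sqrt_three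
    (tan_half_mul_add_tan_half_mul_add_tan_half_mul_eq_one h₁ h₂ h₃ hangles) heq
  have hmem {α : ℝ} (h : 0 < α ∧ α < π) : α / 2 ∈ Set.Ioo (-(π / 2)) (π / 2) :=
    ⟨by linarith, by linarith⟩
  have e12 := injOn_tan (hmem h₁) (hmem h₂) h12
  have e23 := injOn_tan (hmem h₂) (hmem h₃) h23
  refine ⟨?_, ?_, ?_⟩ <;> linarith

end Triangle

theorem width_le_inv_sqrt_three_general (a b c w α₁ α₂ α₃ : ℝ)
    (h₁ : 0 < α₁ ∧ α₁ < Real.pi) (h₂ : 0 < α₂ ∧ α₂ < Real.pi)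
    (h₃ : 0 < α₃ ∧ α₃ < Real.pi) (hangles : α₁ + α₂ + α₃ = Real.pi)
    (hperim : a + b + c = 1)
    (hx : w / 2 * (Real.tan (α₁ / 2) + Real.tan (α₂ / 2)) ≤ a)
    (hy : w / 2 * (Real.tan (α₂ / 2) + Real.tan (α₃ / 2)) ≤ b)
    (hz : w / 2 * (Real.tan (α₃ / 2) + Real.tan (α₁ / 2)) ≤ c) :
    w ≤ 1 / Real.sqrt 3 ∧
      (w = 1 / Real.sqrt 3 →
        α₁ = Real.pi / 3 ∧ α₂ = Real.pi / 3 ∧ α₃ = Real.pi / 3 ∧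
          a = b ∧ b = c) := by
  set T := tan (α₁ / 2) + tan (α₂ / 2) + tan (α₃ / 2) with hT_def
  have hT : √3 ≤ T := sqrt_three_le_tan_half_add_tan_half_add_tan_half h₁ h₂ h₃ hangles
  have hT_pos : 0 < T := lt_of_lt_of_le (by positivity) hT
  have hwT : w * T ≤ 1 := by linarith
  have hw : w ≤ 1 / T := by rwa [le_div_iff₀ hT_pos]
  refine ⟨hw.trans (one_div_le_one_div_of_le (by positivity) hT), fun hw_eq => ?_⟩
  have hT_eq : T = √3 := by
    refine le_antisymm ?_ hT
    rwa [hw_eq, le_one_div (by positivity) (by positivity), one_div_one_div] at hw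
  obtain ⟨rfl, rfl, rfl⟩ :=
    eq_pi_div_three_of_tan_half_add_tan_half_add_tan_half_eq_sqrt_three h₁ h₂ h₃ hangles hT_eq
  have hwT_eq : w * T = 1 := by rw [hT_eq, hw_eq, one_div_mul_cancel (by positivity)]
  have hsides : 3 * (w / 2 * (tan (π / 3 / 2) + tan (π / 3 / 2))) = w * T := by
    rw [hT_def]; ring
  refine ⟨rfl, rfl, rfl, ?_, ?_⟩ <;> linarith

/-- A folded ribbon 3-stick unknot whose diagram is a non-degenerate triangle of
perimeter 1 with interior angles `α₁, α₂, α₃`, whose width `w` satisfies the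
non-overlap constraint on each edge, has `w ≤ 1/√3`; the bound is attained only
when the triangle is equilateral. -/
theorem width_le_inv_sqrt_three (a b c w α₁ α₂ α₃ : ℝ) (hw : 0 < w)
    (h₁ : 0 < α₁ ∧ α₁ < Real.pi) (h₂ : 0 < α₂ ∧ α₂ < Real.pi)
    (h₃ : 0 < α₃ ∧ α₃ < Real.pi) (hangles : α₁ + α₂ + α₃ = Real.pi)
    (hperim : a + b + c = 1)
    (hx : w / 2 * (Real.tan (α₁ / 2) + Real.tan (α₂ / 2)) ≤ a)
    (hy : w / 2 * (Real.tan (α₂ / 2) + Real.tan (α₃ / 2)) ≤ b)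
    (hz : w / 2 * (Real.tan (α₃ / 2) + Real.tan (α₁ / 2)) ≤ c) :
    w ≤ 1 / Real.sqrt 3 ∧
      (w = 1 / Real.sqrt 3 →
        α₁ = Real.pi / 3 ∧ α₂ = Real.pi / 3 ∧ α₃ = Real.pi / 3 ∧
          a = b ∧ b = c) :=
  width_le_inv_sqrt_three_general a b c w α₁ α₂ α₃ h₁ h₂ h₃ hangles hperim hx hy hz
end

section
/- Under the hypotheses of the previous statement (triangle of perimeter 1, width constraints satisfied), the folded ribbonlength Len/w = 1/w is at least √3, and the value √3 is attained when the triangle is equilateral with w = 1/√3. -/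
open Real

lemma tan_sum_identity {x y : ℝ} (hx : 0 < x) (hy : 0 < y) (hxy : x + y < Real.pi / 2) :
    Real.tan x * Real.tan y + Real.tan y * Real.tan (Real.pi / 2 - (x + y)) +
      Real.tan (Real.pi / 2 - (x + y)) * Real.tan x = 1 := by
  have hcx : Real.cos x ≠ 0 :=
    ne_of_gt (Real.cos_pos_of_mem_Ioo ⟨by linarith [Real.pi_pos], by linarith⟩)
  have hcy : Real.cos y ≠ 0 :=
    ne_of_gt (Real.cos_pos_of_mem_Ioo ⟨by linarith [Real.pi_pos], by linarith⟩)
  have hs : Real.sin (x + y) ≠ 0 :=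
    ne_of_gt (Real.sin_pos_of_pos_of_lt_pi (by linarith) (by linarith [Real.pi_pos]))
  rw [Real.tan_eq_sin_div_cos, Real.tan_eq_sin_div_cos, Real.tan_eq_sin_div_cos,
    Real.sin_pi_div_two_sub, Real.cos_pi_div_two_sub]
  rw [Real.sin_add] at hs ⊢
  rw [Real.cos_add]
  field_simp
  ring

/-- Under the hypotheses of the width bound (triangle angles in `(0, π)` summing
to `π`, width `w > 0` with `w ≤ 1/(∑ tan (αᵢ/2))`), the folded ribbonlength
`1/w` is at least `√3`; the value `√3` is attained when the triangle is
equilateral with `w = 1/√3`. -/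
theorem ribbonlength_ge_sqrt_three (w α₁ α₂ α₃ : ℝ) (hw : 0 < w)
    (h₁ : 0 < α₁ ∧ α₁ < Real.pi) (h₂ : 0 < α₂ ∧ α₂ < Real.pi)
    (h₃ : 0 < α₃ ∧ α₃ < Real.pi) (hangles : α₁ + α₂ + α₃ = Real.pi)
    (hwle : w ≤ 1 / (Real.tan (α₁ / 2) + Real.tan (α₂ / 2) + Real.tan (α₃ / 2))) :
    Real.sqrt 3 ≤ 1 / w ∧
      (α₁ = Real.pi / 3 ∧ α₂ = Real.pi / 3 ∧ α₃ = Real.pi / 3 ∧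
          w = 1 / Real.sqrt 3 → 1 / w = Real.sqrt 3) := by
  constructor
  · set x := α₁ / 2
    set y := α₂ / 2
    set z := α₃ / 2
    have hx : 0 < x := by simp only [x]; linarith [h₁.1]
    have hy : 0 < y := by simp only [y]; linarith [h₂.1]
    have hz : 0 < z := by simp only [z]; linarith [h₃.1]
    have hz' : z = Real.pi / 2 - (x + y) := by simp only [x, y, z]; linarith
    have hxy : x + y < Real.pi / 2 := by linarith
    have hxlt : x < Real.pi / 2 := by linarith
    have hylt : y < Real.pi / 2 := by linarith
    have hzlt : z < Real.pi / 2 := by linarith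
    have ha : 0 < Real.tan x := Real.tan_pos_of_pos_of_lt_pi_div_two hx hxlt
    have hb : 0 < Real.tan y := Real.tan_pos_of_pos_of_lt_pi_div_two hy hylt
    have hc : 0 < Real.tan z := Real.tan_pos_of_pos_of_lt_pi_div_two hz hzlt
    have hid : Real.tan x * Real.tan y + Real.tan y * Real.tan z +
        Real.tan z * Real.tan x = 1 := by
      rw [hz']; exact tan_sum_identity hx hy hxy
    set s := Real.tan x + Real.tan y + Real.tan z with hs
    have hspos : 0 < s := by positivity
    have hsq : 3 ≤ s ^ 2 := by nlinarith [sq_nonneg (Real.tan x - Real.tan y), sq_nonneg (Real.tan y - Real.tan z), sq_nonneg (Real.tan z - Real.tan x)]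
    have hsqrt : Real.sqrt 3 ≤ s := by
      nlinarith [Real.sq_sqrt (show (0:ℝ) ≤ 3 by norm_num), Real.sqrt_nonneg 3]
    have h1w : s ≤ 1 / w := by
      have := one_div_le_one_div_of_le hw hwle
      rwa [one_div_one_div] at this
    linarith
  · rintro ⟨-, -, -, hw'⟩
    rw [hw', one_div_one_div]
end

section
/- Let n ≥ 3 and consider an n-gon of perimeter 1 with interior angles αᵢ ∈ [π/2, π) and edge lengths ℓᵢ, and let w > 0 satisfy ℓᵢ ≥ (w/2)(tan(αᵢ/2) + tan(αᵢ₊₁/2)) for all i (indices mod n). Then w ≤ 1/(n·cot(π/n)), i.e., the folded ribbonlength 1/w is at least n·cot(π/n). -/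
/-!
Summing the fold constraints over all edges counts every `tan (αᵢ / 2)` twice, so
`w · ∑ tan (αᵢ / 2) ≤ ∑ ℓᵢ = 1`. The half-angles lie in `[0, π/2)`, where `tan` is convex, and
average to `π/2 - π/n`; by Jensen, `∑ tan (αᵢ / 2) ≥ n · tan (π/2 - π/n) = n · cot (π/n)`.
-/

open Real Finset

lemma cos_pos_of_mem_Ico {x : ℝ} (hx : x ∈ Set.Ico 0 (π / 2)) : 0 < cos x :=
  cos_pos_of_mem_Ioo ⟨by linarith [hx.1, pi_pos], hx.2⟩

lemma convexOn_tan : ConvexOn ℝ (Set.Ico 0 (π / 2)) tan := by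
  apply MonotoneOn.convexOn_of_deriv (convex_Ico _ _)
  · exact continuousOn_tan.mono fun x hx => (cos_pos_of_mem_Ico hx).ne'
  · rw [interior_Ico]
    exact fun x hx => (differentiableAt_tan.2
      (cos_pos_of_mem_Ico (Set.Ioo_subset_Ico_self hx)).ne').differentiableWithinAt
  · rw [interior_Ico]
    intro x hx y hy hxy
    have hcy := cos_pos_of_mem_Ico (Set.Ioo_subset_Ico_self hy)
    have hcos : cos y ≤ cos x :=
      cos_le_cos_of_nonneg_of_le_pi hx.1.le (by linarith [hy.2, pi_pos]) hxy
    simp only [deriv_tan]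
    gcongr

lemma cot_eq_tan_pi_div_two_sub (x : ℝ) : cot x = tan (π / 2 - x) := by
  rw [tan_pi_div_two_sub, cot_eq_cos_div_sin, tan_eq_sin_div_cos, inv_div]

lemma cot_pi_div_pos {n : ℕ} (hn : 2 < n) : 0 < cot (π / n) := by
  have hn' : (2 : ℝ) < n := by exact_mod_cast hn
  have hpos : 0 < π / n := by positivity
  have hlt : π / n < π / 2 := div_lt_div_of_pos_left pi_pos two_pos hn'
  rw [cot_eq_cos_div_sin]
  exact div_pos (cos_pos_of_mem_Ioo ⟨by linarith, hlt⟩)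
    (sin_pos_of_pos_of_lt_pi hpos (by linarith [pi_pos]))

theorem card_mul_cot_le_sum_tan_half {ι : Type*} [Fintype ι] [Nonempty ι] (α : ι → ℝ)
    (hα : ∀ i, 0 ≤ α i ∧ α i < π) (hsum : ∑ i, α i = (Fintype.card ι - 2 : ℝ) * π) :
    Fintype.card ι * cot (π / Fintype.card ι) ≤ ∑ i, tan (α i / 2) := by
  set n : ℝ := (Fintype.card ι : ℝ)
  have hn : 0 < n := by positivity
  have hmean : ∑ i, n⁻¹ • (α i / 2) = π / 2 - π / n := by
    simp only [smul_eq_mul, ← mul_sum, ← sum_div, hsum]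
    field_simp
  have hjensen := convexOn_tan.map_sum_le (t := univ) (w := fun _ => n⁻¹)
    (p := fun i => α i / 2) (fun _ _ => by positivity) (by simp [n])
    (fun i _ => ⟨by linarith [(hα i).1], by linarith [(hα i).2]⟩)
  rw [hmean, ← cot_eq_tan_pi_div_two_sub] at hjensen
  simp only [smul_eq_mul, ← mul_sum] at hjensen
  calc n * cot (π / n) ≤ n * (n⁻¹ * ∑ i, tan (α i / 2)) := by gcongr
    _ = ∑ i, tan (α i / 2) := by field_simp

lemma Fin.sum_add_comp_add_one {M : Type*} [AddCommMonoid M] {n : ℕ} [NeZero n] (f : Fin n → M) :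
    ∑ i, (f i + f (i + 1)) = 2 • ∑ i, f i := by
  rw [sum_add_distrib, two_nsmul]
  exact congrArg _ (Equiv.sum_comp (Equiv.addRight 1) f)

theorem width_le_ngon_general (n : ℕ) [NeZero n] (hn : 3 ≤ n) (ℓ α : Fin n → ℝ) (w : ℝ) (hw : 0 < w)
    (hperim : ∑ i, ℓ i = 1)
    (hα : ∀ i, Real.pi / 2 ≤ α i ∧ α i < Real.pi)
    (hαsum : ∑ i, α i = (n - 2 : ℝ) * Real.pi)
    (hfold : ∀ i, w / 2 * (Real.tan (α i / 2) + Real.tan (α (i + 1) / 2)) ≤ ℓ i) :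
    w ≤ 1 / ((n : ℝ) * Real.cot (Real.pi / n)) ∧
      (n : ℝ) * Real.cot (Real.pi / n) ≤ 1 / w := by
  have hC : 0 < (n : ℝ) * cot (π / n) := mul_pos (by positivity) (cot_pi_div_pos hn)
  have hjensen : (n : ℝ) * cot (π / n) ≤ ∑ i, tan (α i / 2) := by
    simpa using card_mul_cot_le_sum_tan_half α
      (fun i => ⟨by linarith [(hα i).1, pi_pos], (hα i).2⟩) (by simpa using hαsum)
  have hwC : w * (n * cot (π / n)) ≤ 1 :=
    calc w * (n * cot (π / n)) ≤ w * ∑ i, tan (α i / 2) := by gcongr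
      _ = ∑ i, w / 2 * (tan (α i / 2) + tan (α (i + 1) / 2)) := by
        rw [← mul_sum, Fin.sum_add_comp_add_one, nsmul_eq_mul]
        ring
      _ ≤ ∑ i, ℓ i := sum_le_sum fun i _ => hfold i
      _ = 1 := hperim
  exact ⟨(le_div_iff₀ hC).2 (by linarith), (le_div_iff₀ hw).2 (by linarith)⟩

/-- For an `n`-gon (`n ≥ 3`) of perimeter 1 with interior angles `αᵢ ∈ [π/2, π)`
and edge lengths `ℓᵢ > 0`, if a width `w > 0` satisfies the non-overlap constraint
`ℓᵢ ≥ (w/2)(tan (αᵢ/2) + tan (αᵢ₊₁/2))` for all `i` (indices mod `n`), then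
`w ≤ 1/(n · cot (π/n))`, i.e. the folded ribbonlength `1/w` is at least
`n · cot (π/n)`. -/
theorem width_le_ngon (n : ℕ) [NeZero n] (hn : 3 ≤ n) (ℓ α : Fin n → ℝ) (w : ℝ) (hw : 0 < w)
    (hℓpos : ∀ i, 0 < ℓ i) (hperim : ∑ i, ℓ i = 1)
    (hα : ∀ i, Real.pi / 2 ≤ α i ∧ α i < Real.pi)
    (hαsum : ∑ i, α i = (n - 2 : ℝ) * Real.pi)
    (hfold : ∀ i, w / 2 * (Real.tan (α i / 2) + Real.tan (α (i + 1) / 2)) ≤ ℓ i) :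
    w ≤ 1 / ((n : ℝ) * Real.cot (Real.pi / n)) ∧
      (n : ℝ) * Real.cot (Real.pi / n) ≤ 1 / w :=
  width_le_ngon_general n hn ℓ α w hw hperim hα hαsum hfold
end

section
/- For an oriented folded ribbon knot viewed as a framed knot, Lk = Tw + Wr when the ribbon is an annulus; in the combinatorial model where each of the 2n same-sign folds contributes +1/2 (annulus case) to the linking number and writhe is 0, a ribbon linking number of ±n forces at least 2n folds, hence (since each fold costs ribbonlength at least 1) the folded ribbonlength is at least 2n. -/
/-- Annulus case with zero writhe: if the fold signs `s : Fin m → {±1}` satisfy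
`(1/2)·∑ s i = n` with `n ≥ 0` (i.e. `∑ s i = 2n`), then `m ≥ 2n`; consequently,
since each fold of angle `θᵢ ∈ (0, π)` has ribbonlength `1/sin θᵢ ≥ 1`, the total
folded ribbonlength `∑ 1/sin θᵢ` is at least `2n`. -/
theorem annulus_ribbonlength_lower_bound (m : ℕ) (n : ℤ) (hn : 0 ≤ n)
    (s : Fin m → ℤ) (hs : ∀ i, s i = 1 ∨ s i = -1) (hsum : ∑ i, s i = 2 * n)
    (θ : Fin m → ℝ) (hθ : ∀ i, 0 < θ i ∧ θ i < Real.pi) :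
    2 * n ≤ (m : ℤ) ∧ (2 * n : ℝ) ≤ ∑ i, 1 / Real.sin (θ i) := by
  have hm : 2 * n ≤ (m : ℤ) := by
    calc 2 * n = ∑ i, s i := hsum.symm
    _ ≤ ∑ _i : Fin m, (1 : ℤ) := Finset.sum_le_sum fun i _ => by
        rcases hs i with h | h <;> simp [h]
    _ = (m : ℤ) := by simp
  refine ⟨hm, ?_⟩
  calc (2 * n : ℝ) ≤ (m : ℝ) := by exact_mod_cast hm
  _ = ∑ _i : Fin m, (1 : ℝ) := by simp
  _ ≤ ∑ i, 1 / Real.sin (θ i) := Finset.sum_le_sum fun i _ => by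
      have h1 := (hθ i).1
      have h2 := (hθ i).2
      have hpos : 0 < Real.sin (θ i) := Real.sin_pos_of_pos_of_lt_pi h1 h2
      have hle : Real.sin (θ i) ≤ 1 := Real.sin_le_one _
      rw [le_div_iff₀ hpos]; linarith
end
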